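/- Let A = ISP(M) be a finitely generated D-based quasivariety (M a finite set of finite algebras), let Ω = ⋃_{M∈M} Ω_M with each Ω_M ⊆ D(U(M), 2) satisfy (Sep)_{M,Ω}, and let the piggyback duality of the Multisorted Piggyback Duality Theorem be set up. For A in A with X = D(A), let Y = ⋃{ X_M × Ω_M : M in M }, topologized so that a base of open sets is {U × {ω} : U open in X_M, ω in Ω_M}, and define (x, ω_1) ⪯ (y, ω_2) iff (x, y) belongs to r^X for some r in R_{ω_1,ω_2}. Then: (i) (Y, T_Y) is compact and Hausdorff; (ii) ⪯ is a pre-order on Y; (iii) letting ≈ = ⪯ ∩ ⪰, the quotient (Y/≈, ⪯/≈, T_Y/≈) with the quotient topology is a Priestley space isomorphic to HU(A). -/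

import Mathlib

open FirstOrder FirstOrder.Language FirstOrder.Language.Structure

namespace CoproductsPaper

variable {L : FirstOrder.Language.{0,0}}

/-- Pointwise structure on a product of `L`-structures. -/
instance piStructure {ι : Type} (M : ι → Type) [∀ i, L.Structure (M i)] :
    L.Structure (∀ i, M i) where
  funMap f x i := funMap f fun j => x j i
  RelMap r x := ∀ i, RelMap r fun j => x j i

/-- Pointwise structure on a binary product of `L`-structures. -/
instance prodStructure {M N : Type} [L.Structure M] [L.Structure N] :
    L.Structure (M × N) where
  funMap f x := (funMap f fun j => (x j).1, funMap f fun j => (x j).2)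
  RelMap r x := RelMap r (fun j => (x j).1) ∧ RelMap r fun j => (x j).2

/-- A choice of bounded-lattice symbols in the language `L`. -/
structure DSig (L : FirstOrder.Language.{0,0}) where
  meet : L.Functions 2
  join : L.Functions 2
  bot : L.Functions 0
  top : L.Functions 0

variable (s : DSig L)

/-- The induced meet operation. -/
def dmeet {X : Type} [L.Structure X] (a b : X) : X := funMap s.meet ![a, b]
/-- The induced join operation. -/
def djoin {X : Type} [L.Structure X] (a b : X) : X := funMap s.join ![a, b]
/-- The induced bottom element. -/
def dbot (X : Type) [L.Structure X] : X := funMap s.bot ![]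
/-- The induced top element. -/
def dtop (X : Type) [L.Structure X] : X := funMap s.top ![]

/-- The induced operations make `X` a bounded distributive lattice:
this is the property of having a `D`-reduct. -/
structure IsDAlg (X : Type) [L.Structure X] : Prop where
  meet_comm : ∀ a b : X, dmeet s a b = dmeet s b a
  join_comm : ∀ a b : X, djoin s a b = djoin s b a
  meet_assoc : ∀ a b c : X, dmeet s (dmeet s a b) c = dmeet s a (dmeet s b c)
  join_assoc : ∀ a b c : X, djoin s (djoin s a b) c = djoin s a (djoin s b c)
  absorb_meet : ∀ a b : X, dmeet s a (djoin s a b) = a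
  absorb_join : ∀ a b : X, djoin s a (dmeet s a b) = a
  meet_distrib : ∀ a b c : X, dmeet s a (djoin s b c) = djoin s (dmeet s a b) (dmeet s a c)
  bot_join : ∀ a : X, djoin s (dbot s X) a = a
  top_meet : ∀ a : X, dmeet s (dtop s X) a = a

/-- A `D`-morphism from the `D`-reduct of `X` to the two-element lattice `2 = Bool`. -/
def IsBoolDHom {X : Type} [L.Structure X] (ω : X → Bool) : Prop :=
  (∀ a b : X, ω (dmeet s a b) = (ω a && ω b)) ∧
  (∀ a b : X, ω (djoin s a b) = (ω a || ω b)) ∧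
  ω (dbot s X) = false ∧ ω (dtop s X) = true

/-- A class of `L`-structures. -/
abbrev ClassOf (L : FirstOrder.Language.{0,0}) : Type 1 := (X : Type) → L.Structure X → Prop

/-- Membership in `ISP M` for a (multi-generator) family `M`:
isomorphic copies of subalgebras of products of the `M i`, i.e. structures embeddable
into a product of members of the family. -/
def ISPc {ι : Type} (Mf : ι → Type) [∀ i, L.Structure (Mf i)] : ClassOf L :=
  fun X iX => ∃ (κ : Type) (g : κ → ι),
    Nonempty (@FirstOrder.Language.Embedding L X (∀ k, Mf (g k)) iX inferInstance)

/-- Membership in `ISP M` for a single generator. -/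
def ISPc1 (M : Type) [L.Structure M] : ClassOf L :=
  fun X iX => ∃ κ : Type,
    Nonempty (@FirstOrder.Language.Embedding L X (κ → M) iX inferInstance)

/-- The separation condition `(Sep)_{M,Ω}`. -/
def SepCond {ι : Type} (Mf : ι → Type) [∀ i, L.Structure (Mf i)]
    (Ω : ∀ i, Set (Mf i → Bool)) : Prop :=
  ∀ (i : ι) (a b : Mf i), a ≠ b →
    ∃ (j : ι) (u : Mf i →[L] Mf j) (ω : Mf j → Bool), ω ∈ Ω j ∧ ω (u a) ≠ ω (u b)

/-- The separation condition `(Sep)_{M,ω}` for a single algebra and single carrier map. -/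
def SepCond1 (M : Type) [L.Structure M] (ω : M → Bool) : Prop :=
  ∀ a b : M, a ≠ b → ∃ u : M →[L] M, ω (u a) ≠ ω (u b)

/-- The bounded sublattice `(ω₁,ω₂)^{-1}(≤)` of `M × N`. -/
def piggySet {M N : Type} (ω₁ : M → Bool) (ω₂ : N → Bool) : Set (M × N) :=
  {p | ω₁ p.1 ≤ ω₂ p.2}

/-- `R_{ω₁,ω₂}`: the set of subalgebras of `M × N` that are maximal with respect to
being contained in `(ω₁,ω₂)^{-1}(≤)`. -/
def RSet {M N : Type} [L.Structure M] [L.Structure N]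
    (ω₁ : M → Bool) (ω₂ : N → Bool) : Set (L.Substructure (M × N)) :=
  {r : L.Substructure (M × N) | (r : Set (M × N)) ⊆ piggySet ω₁ ω₂ ∧
    ∀ r' : L.Substructure (M × N), (r' : Set (M × N)) ⊆ piggySet ω₁ ω₂ → r ≤ r' → r' = r}

/-- `(C, ε)` is a coproduct co-cone for the family `K` within the class `Acl`. -/
def IsCoprod (Acl : ClassOf L) {κ : Type} (K : κ → Type) [iK : ∀ k, L.Structure (K k)]
    (C : Type) [iC : L.Structure C] (ε : ∀ k, K k →[L] C) : Prop :=
  Acl C iC ∧ ∀ (B : Type) [iB : L.Structure B], Acl B iB →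
    ∀ f : ∀ k, K k →[L] B, ∃! h : C →[L] B, ∀ k, h.comp (ε k) = f k

/-- `F` is free over the class `Acl` on the generators `gen : G → F`. -/
def IsFreeOver (Acl : ClassOf L) (G : Type) (F : Type) [iF : L.Structure F]
    (gen : G → F) : Prop :=
  Acl F iF ∧ ∀ (B : Type) [iB : L.Structure B], Acl B iB →
    ∀ v : G → B, ∃! h : F →[L] B, ∀ x : G, h (gen x) = v x

/-- A bounded-lattice homomorphism between bounded lattices (unbundled). -/
def IsBLHom {P Q : Type} [Lattice P] [BoundedOrder P] [Lattice Q] [BoundedOrder Q]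
    (h : P → Q) : Prop :=
  (∀ a b : P, h (a ⊓ b) = h a ⊓ h b) ∧ (∀ a b : P, h (a ⊔ b) = h a ⊔ h b) ∧
    h ⊥ = ⊥ ∧ h ⊤ = ⊤

/-- A `D`-morphism from the `D`-reduct of the `L`-structure `X` to a bounded lattice `Q`. -/
def IsRedHom {X Q : Type} [L.Structure X] [Lattice Q] [BoundedOrder Q] (f : X → Q) : Prop :=
  (∀ a b : X, f (dmeet s a b) = f a ⊓ f b) ∧ (∀ a b : X, f (djoin s a b) = f a ⊔ f b) ∧
    f (dbot s X) = ⊥ ∧ f (dtop s X) = ⊤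

/-- A `D`-morphism from a bounded lattice `P` to the `D`-reduct of the `L`-structure `X`. -/
def IsCoRedHom {P X : Type} [Lattice P] [BoundedOrder P] [L.Structure X] (f : P → X) : Prop :=
  (∀ a b : P, f (a ⊓ b) = dmeet s (f a) (f b)) ∧ (∀ a b : P, f (a ⊔ b) = djoin s (f a) (f b)) ∧
    f ⊥ = dbot s X ∧ f ⊤ = dtop s X

/-- `(P, η)` is the coproduct in `D` of the `D`-reducts of the family `K`. -/
def IsDCoprodOfReducts {κ : Type} (K : κ → Type) [∀ k, L.Structure (K k)]
    (P : Type) [DistribLattice P] [BoundedOrder P] (η : ∀ k, K k → P) : Prop :=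
  (∀ k, IsRedHom s (η k)) ∧
  ∀ (Q : Type) [DistribLattice Q] [BoundedOrder Q] (g : ∀ k, K k → Q),
    (∀ k, IsRedHom s (g k)) →
      ∃! h : {h : P → Q // IsBLHom h}, ∀ k, (h : P → Q) ∘ η k = g k

/-- The discrete product topology on a function space. -/
def powTop (A M : Type) : TopologicalSpace (A → M) :=
  @Pi.topologicalSpace A (fun _ => M) (fun _ => ⊥)

/-- The natural topology on the hom-set `A(A, M)`, inherited from `M^A` with `M` discrete. -/
def homTop (A M : Type) [L.Structure A] [L.Structure M] : TopologicalSpace (A →[L] M) :=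
  (powTop A M).induced (fun h => (h : A → M))

/-- The topology on `HU(A) = D(U(A), 2)`, inherited from `2^A`. -/
def huTop (X : Type) [L.Structure X] : TopologicalSpace {f : X → Bool // IsBoolDHom s f} :=
  (powTop X Bool).induced Subtype.val


/-- A bounded sublattice of the `D`-reduct of `X`: a subset closed under the induced
meet and join and containing the bounds. -/
def IsBddSublattice (s : DSig L) {X : Type} [L.Structure X] (Ls : Set X) : Prop :=
  (∀ a ∈ Ls, ∀ b ∈ Ls, dmeet s a b ∈ Ls) ∧ (∀ a ∈ Ls, ∀ b ∈ Ls, djoin s a b ∈ Ls) ∧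
    dbot s X ∈ Ls ∧ dtop s X ∈ Ls

/-- `B` is subdirectly irreducible relative to the class `Acl`: whenever `B` is
(isomorphic to) a subdirect product of algebras in `Acl`, one of the projections is
already an isomorphism. -/
def IsSIrel (Acl : ClassOf L) (B : Type) [iB : L.Structure B] : Prop :=
  Acl B iB ∧
  ∀ (κ : Type) (Cf : κ → Type) [iC : ∀ k, L.Structure (Cf k)],
    (∀ k, Acl (Cf k) (iC k)) →
    ∀ e : B ↪[L] (∀ k, Cf k),
      (∀ k, Function.Surjective (fun b : B => e b k)) →
      ∃ k, Function.Bijective (fun b : B => e b k)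

/-- Two classes of `L`-structures coincide. -/
def ClassEq (Acl Bcl : ClassOf L) : Prop :=
  ∀ (X : Type) (iX : L.Structure X), Acl X iX ↔ Bcl X iX

/-- The forgetful functor `U : A → D` of the `D`-based class `Acl` satisfies (S):
for each set `K ⊆ A`, the canonical `D`-homomorphism
`χ_K : ∐_D U(K) → U(∐_A K)` (i.e. the unique `D`-morphism commuting with the
coproduct injections) is surjective. -/
def SatisfiesS (s : DSig L) (Acl : ClassOf L) : Prop :=
  ∀ (κ : Type) (K : κ → Type) [iK : ∀ k, L.Structure (K k)],
    (∀ k, Acl (K k) (iK k)) →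
    ∀ (C : Type) [iC : L.Structure C] (ε : ∀ k, K k →[L] C), IsCoprod Acl K C ε →
    ∀ (P : Type) [DistribLattice P] [BoundedOrder P] (η : ∀ k, K k → P),
      IsDCoprodOfReducts s K P η →
    ∀ χ : P → C, IsCoRedHom s χ → (∀ k, χ ∘ η k = ⇑(ε k)) → Function.Surjective χ

/-- The forgetful functor `U : A → D` of the `D`-based class `Acl` satisfies (E):
for each set `K ⊆ A`, the canonical `D`-homomorphism
`χ_K : ∐_D U(K) → U(∐_A K)` is injective. -/
def SatisfiesE (s : DSig L) (Acl : ClassOf L) : Prop :=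
  ∀ (κ : Type) (K : κ → Type) [iK : ∀ k, L.Structure (K k)],
    (∀ k, Acl (K k) (iK k)) →
    ∀ (C : Type) [iC : L.Structure C] (ε : ∀ k, K k →[L] C), IsCoprod Acl K C ε →
    ∀ (P : Type) [DistribLattice P] [BoundedOrder P] (η : ∀ k, K k → P),
      IsDCoprodOfReducts s K P η →
    ∀ χ : P → C, IsCoRedHom s χ → (∀ k, χ ∘ η k = ⇑(ε k)) → Function.Injective χ

section Statement2

variable (L₀ : FirstOrder.Language.{0,0})
variable {ι : Type} (Mf : ι → Type) [∀ i, L₀.Structure (Mf i)]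
  (Ω : ∀ i, Set (Mf i → Bool)) (A : Type) [L₀.Structure A]

/-- The underlying set of `Y = ⋃ { X_M × Ω_M : M ∈ M }`, where `X_M = A(A,M)` is the
`M`-th sort of the multisorted natural dual `D(A)`. -/
def YSet : Type := Σ i : ι, ((A →[L₀] Mf i) × ↥(Ω i))

/-- The topology `T_Y` on `Y`: on each sort it is the product of the natural topology
on `X_M = A(A,M)` (inherited from `M^A`, `M` discrete) with the discrete topology on
`Ω_M`; a base of open sets is given by the sets `U × {ω}`. -/
def yTop : TopologicalSpace (YSet L₀ Mf Ω A) :=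
  ⨆ i : ι, TopologicalSpace.coinduced (Sigma.mk i)
    (@instTopologicalSpaceProd _ _ (homTop (L := L₀) A (Mf i)) ⊥)

/-- The relation `⪯` on `Y`: `(x,ω₁) ⪯ (y,ω₂)` iff `(x,y) ∈ r^X` for some
`r ∈ R_{ω₁,ω₂}`. -/
def yle (p q : YSet L₀ Mf Ω A) : Prop :=
  ∃ r ∈ RSet (L := L₀) (p.2.2 : Mf p.1 → Bool) (q.2.2 : Mf q.1 → Bool),
    ∀ a : A, (p.2.1 a, q.2.1 a) ∈ r

/-- The equivalence relation `≈ = ⪯ ∩ ⪰` determined by the pre-order `⪯`. -/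
def yequiv (p q : YSet L₀ Mf Ω A) : Prop :=
  yle L₀ Mf Ω A p q ∧ yle L₀ Mf Ω A q p

/-- The quotient `Y/≈`. -/
def YQuot : Type := Quot (yequiv L₀ Mf Ω A)

/-- The quotient topology `T_Y/≈` on `Y/≈`. -/
def yQuotTop : TopologicalSpace (YQuot L₀ Mf Ω A) :=
  (yTop L₀ Mf Ω A).coinduced (Quot.mk (yequiv L₀ Mf Ω A))

/-- The quotient `⪯/≈` of the pre-order `⪯` on `Y/≈`. -/
def yQuotLe (u v : YQuot L₀ Mf Ω A) : Prop :=
  ∃ p q : YSet L₀ Mf Ω A,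
    u = Quot.mk (yequiv L₀ Mf Ω A) p ∧ v = Quot.mk (yequiv L₀ Mf Ω A) q ∧
      yle L₀ Mf Ω A p q

end Statement2

/-!
A point `(x, ω)` of `Y` evaluates to the `D`-morphism `ω ∘ x : A → 2`. Since the algebras in `M`
are finite, every subalgebra of `M₁ × M₂` inside `(ω₁,ω₂)⁻¹(≤)`, in particular
`{(x a, y a) : a ∈ A}`, lies in a maximal one; so `(x, ω₁) ⪯ (y, ω₂)` iff `ω₁ ∘ x ≤ ω₂ ∘ y`
pointwise, and `≈` is the kernel of the evaluation map. As `A ∈ ISP(M)`, `(Sep)` makes the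
evaluations separate every `a ≰ b`, hence they agree with any `D`-morphism on every finite subset
of `A`. The evaluation map is continuous on the compact space `Y`, so its image is closed and is
all of `HU(A)`; a continuous bijection from the compact quotient onto the Hausdorff space `HU(A)`
is a homeomorphism, and the Priestley axioms are inherited from the pointwise order of `2^A`.
-/

variable {s}

section DReduct

variable {M N : Type} [L.Structure M] [L.Structure N]

theorem map_dmeet (h : M →[L] N) (a b : M) : h (dmeet s a b) = dmeet s (h a) (h b) := by
  simp only [dmeet, h.map_fun]; congr 1; funext i; fin_cases i <;> rfl

theorem map_djoin (h : M →[L] N) (a b : M) : h (djoin s a b) = djoin s (h a) (h b) := by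
  simp only [djoin, h.map_fun]; congr 1; funext i; fin_cases i <;> rfl

theorem map_dbot (h : M →[L] N) : h (dbot s M) = dbot s N := by
  simp only [dbot, h.map_fun]; congr 1; funext i; exact i.elim0

theorem map_dtop (h : M →[L] N) : h (dtop s M) = dtop s N := by
  simp only [dtop, h.map_fun]; congr 1; funext i; exact i.elim0

theorem IsBoolDHom.comp {ω : N → Bool} (hω : IsBoolDHom s ω) (h : M →[L] N) :
    IsBoolDHom s (ω ∘ h) :=
  ⟨fun a b => by simp only [Function.comp_apply, map_dmeet, hω.1],
   fun a b => by simp only [Function.comp_apply, map_djoin, hω.2.1],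
   by simp only [Function.comp_apply, map_dbot, hω.2.2.1],
   by simp only [Function.comp_apply, map_dtop, hω.2.2.2]⟩

theorem IsBoolDHom.foldr_dmeet_eq_true {ω : M → Bool} (hω : IsBoolDHom s ω) (l : List M) :
    ω (l.foldr (dmeet s) (dtop s M)) = true ↔ ∀ a ∈ l, ω a = true := by
  induction l with
  | nil => simp [hω.2.2.2]
  | cons a l ih => simp [hω.1, ih]

theorem IsBoolDHom.foldr_djoin_eq_false {ω : M → Bool} (hω : IsBoolDHom s ω) (l : List M) :
    ω (l.foldr (djoin s) (dbot s M)) = false ↔ ∀ a ∈ l, ω a = false := by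
  induction l with
  | nil => simp [hω.2.2.1]
  | cons a l ih => simp [hω.2.1, ih]

theorem IsBoolDHom.eq_true_and_eq_false_of_dmeet_ne {ω : M → Bool} (hω : IsBoolDHom s ω)
    {a b : M} (h : ω (dmeet s a b) ≠ ω a) : ω a = true ∧ ω b = false := by
  rw [hω.1] at h
  revert h
  cases ω a <;> cases ω b <;> decide

/-- Apply the separation to the meet of the points of `S` that `f` sends to `1` and the join
of those it sends to `0`. -/
theorem exists_eqOn_finset_of_separating {P : Set (M → Bool)} (hP : ∀ g ∈ P, IsBoolDHom s g)
    (hsep : ∀ a b : M, dmeet s a b ≠ a → ∃ g ∈ P, g a = true ∧ g b = false)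
    {f : M → Bool} (hf : IsBoolDHom s f) (S : Finset M) : ∃ g ∈ P, ∀ a ∈ S, g a = f a := by
  set l₁ := (S.filter (f · = true)).toList
  set l₀ := (S.filter (f · = false)).toList
  have htop : f (l₁.foldr (dmeet s) (dtop s M)) = true :=
    (hf.foldr_dmeet_eq_true l₁).2 fun a ha => by simp_all [l₁]
  have hbot : f (l₀.foldr (djoin s) (dbot s M)) = false :=
    (hf.foldr_djoin_eq_false l₀).2 fun a ha => by simp_all [l₀]
  have hne : dmeet s (l₁.foldr (dmeet s) (dtop s M)) (l₀.foldr (djoin s) (dbot s M)) ≠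
      l₁.foldr (dmeet s) (dtop s M) := fun h => by
    simpa [htop, hbot, hf.1] using congrArg f h
  obtain ⟨g, hgP, hg₁, hg₀⟩ := hsep _ _ hne
  refine ⟨g, hgP, fun a ha => ?_⟩
  cases hfa : f a
  · exact ((hP g hgP).foldr_djoin_eq_false l₀).1 hg₀ a (by simp [l₀, ha, hfa])
  · exact ((hP g hgP).foldr_dmeet_eq_true l₁).1 hg₁ a (by simp [l₁, ha, hfa])

end DReduct

theorem mem_of_isCompact_of_forall_finset_exists_eqOn {α β : Type*} [TopologicalSpace β]
    [T1Space β] {P : Set (α → β)} (hP : IsCompact P) {f : α → β}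
    (hf : ∀ S : Finset α, ∃ g ∈ P, ∀ a ∈ S, g a = f a) : f ∈ P := by
  obtain ⟨g, hgP, hg⟩ := hP.inter_iInter_nonempty (fun a => {g : α → β | g a = f a})
    (fun a => isClosed_singleton.preimage (continuous_apply a))
    (fun S => (hf S).imp fun g ⟨hgP, hg⟩ => ⟨hgP, Set.mem_iInter₂.2 hg⟩)
  rwa [show g = f from funext (Set.mem_iInter.1 hg)] at hgP

section MaximalSubalgebras

variable {A M N : Type} [L.Structure A] [L.Structure M] [L.Structure N]

def homProd (x : A →[L] M) (y : A →[L] N) : A →[L] M × N where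
  toFun a := (x a, y a)
  map_fun' f v := Prod.ext (x.map_fun f v) (y.map_fun f v)
  map_rel' r v h := ⟨x.map_rel r v h, y.map_rel r v h⟩

theorem exists_mem_RSet_le [Finite M] [Finite N] {ω₁ : M → Bool} {ω₂ : N → Bool}
    {S : L.Substructure (M × N)} (hS : (S : Set (M × N)) ⊆ piggySet ω₁ ω₂) :
    ∃ r ∈ RSet ω₁ ω₂, S ≤ r := by
  have : Finite (L.Substructure (M × N)) :=
    Finite.of_injective (fun r : L.Substructure (M × N) => (r : Set (M × N)))
      SetLike.coe_injective
  obtain ⟨r, hSr, hr⟩ := Finite.exists_le_maximal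
    (p := fun r : L.Substructure (M × N) => (r : Set (M × N)) ⊆ piggySet ω₁ ω₂) hS
  exact ⟨r, ⟨hr.prop, fun r' hr' hle => le_antisymm (hr.le_of_ge hr' hle) hle⟩, hSr⟩

theorem exists_mem_RSet_forall_mem_iff [Finite M] [Finite N] (ω₁ : M → Bool) (ω₂ : N → Bool)
    (x : A →[L] M) (y : A →[L] N) :
    (∃ r ∈ RSet (L := L) ω₁ ω₂, ∀ a, (x a, y a) ∈ r) ↔ ∀ a, ω₁ (x a) ≤ ω₂ (y a) := by
  constructor
  · rintro ⟨r, hr, hxy⟩ a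
    exact hr.1 (hxy a)
  · intro h
    obtain ⟨r, hr, hle⟩ := exists_mem_RSet_le (S := (homProd x y).range)
      (by rintro _ ⟨a, rfl⟩; exact h a)
    exact ⟨r, hr, fun a => hle ((homProd x y).mem_range_self a)⟩

end MaximalSubalgebras

section HomTopology

variable (A M : Type) [L.Structure A] [L.Structure M]

theorem isClosed_range_coe_hom :
    @IsClosed (A → M) (powTop A M) (Set.range ((⇑) : (A →[L] M) → A → M)) := by
  let : TopologicalSpace M := ⊥
  have : DiscreteTopology M := ⟨rfl⟩
  have hrange : Set.range ((⇑) : (A →[L] M) → A → M) =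
      (⋂ (n : ℕ) (F : L.Functions n) (xs : Fin n → A),
        (fun g : A → M => (g (funMap F xs), g ∘ xs)) ⁻¹' {v | v.1 = funMap F v.2}) ∩
      ⋂ (n : ℕ) (r : L.Relations n) (xs : Fin n → A),
        (fun g : A → M => g ∘ xs) ⁻¹' {v | RelMap r xs → RelMap r v} := by
    ext g
    simp only [Set.mem_inter_iff, Set.mem_iInter, Set.mem_preimage, Set.mem_ofPred_eq,
      Set.mem_range]
    constructor
    · rintro ⟨h, rfl⟩
      exact ⟨fun n F xs => h.map_fun F xs, fun n r xs => h.map_rel r xs⟩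
    · exact fun ⟨hF, hr⟩ => ⟨⟨g, fun {n} F xs => hF n F xs, fun {n} r xs => hr n r xs⟩, rfl⟩
  have hcomp : ∀ {n} (xs : Fin n → A), Continuous fun g : A → M => g ∘ xs :=
    fun xs => continuous_pi fun k => continuous_apply (xs k)
  rw [hrange]
  exact .inter
    (isClosed_iInter fun n => isClosed_iInter fun F => isClosed_iInter fun xs =>
      (isClosed_discrete _).preimage ((continuous_apply _).prodMk (hcomp xs)))
    (isClosed_iInter fun n => isClosed_iInter fun r => isClosed_iInter fun xs =>
      (isClosed_discrete _).preimage (hcomp xs))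

theorem compactSpace_homTop [Finite M] : @CompactSpace (A →[L] M) (homTop A M) := by
  let : TopologicalSpace M := ⊥
  have : DiscreteTopology M := ⟨rfl⟩
  let := homTop (L := L) A M
  have hclosed : IsClosed (Set.range ((⇑) : (A →[L] M) → A → M)) := isClosed_range_coe_hom A M
  refine ⟨(Topology.IsInducing.induced _).isCompact_iff.2 ?_⟩
  rw [Set.image_univ]
  exact hclosed.isCompact

theorem t2Space_homTop : @T2Space (A →[L] M) (homTop A M) := by
  let : TopologicalSpace M := ⊥
  have : DiscreteTopology M := ⟨rfl⟩
  let := homTop (L := L) A M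
  exact (Topology.IsEmbedding.induced (t := Pi.topologicalSpace) DFunLike.coe_injective).t2Space

end HomTopology

theorem Quot.exists_homeomorph_of_forall_rel_iff {X Z : Type*} [TopologicalSpace X]
    [CompactSpace X] [TopologicalSpace Z] [T2Space Z] {r : X → X → Prop} {φ : X → Z}
    (hφ : Continuous φ) (hsurj : Function.Surjective φ) (hr : ∀ p q, r p q ↔ φ p = φ q) :
    ∃ e : Quot r ≃ₜ Z, ∀ p, e (Quot.mk r p) = φ p := by
  let φ' : Quot r → Z := Quot.lift φ fun p q h => (hr p q).1 h
  have hinj : Function.Injective φ' := by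
    rintro ⟨p⟩ ⟨q⟩ h
    exact Quot.sound ((hr p q).2 h)
  have hsurj' : Function.Surjective φ' := fun z =>
    let ⟨p, hp⟩ := hsurj z
    ⟨Quot.mk r p, hp⟩
  have hcont : Continuous (Equiv.ofBijective φ' ⟨hinj, hsurj'⟩) := continuous_quot_lift _ hφ
  exact ⟨hcont.homeoOfEquivCompactToT2, fun _ => rfl⟩

theorem exists_isClopen_upper_of_not_rel {Q α : Type*} [TopologicalSpace Q]
    {R : Q → Q → Prop} {g : Q → α → Bool} (hg : Continuous g) (hR : ∀ u v, R u v ↔ g u ≤ g v)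
    {u v : Q} (huv : ¬ R u v) :
    ∃ U : Set Q, IsClopen U ∧ (∀ w w', R w w' → w ∈ U → w' ∈ U) ∧ u ∈ U ∧ v ∉ U := by
  obtain ⟨a, ha⟩ : ∃ a, ¬ g u a ≤ g v a := by simpa [hR, Pi.le_def] using huv
  have hu : g u a = true ∧ g v a = false := by
    revert ha; cases g u a <;> cases g v a <;> decide
  refine ⟨(fun w => g w a) ⁻¹' {true},
    (isClopen_discrete _).preimage ((continuous_apply a).comp hg),
    fun w w' hww' hw => ?_, hu.1, by simp [hu.2]⟩
  have := (hR w w').1 hww' a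
  rw [Set.mem_preimage, Set.mem_singleton_iff] at hw ⊢
  rw [hw] at this
  exact top_le_iff.1 this

section PiggybackSpace

variable {ι : Type} {Mf : ι → Type} [∀ i, L.Structure (Mf i)] {Ω : ∀ i, Set (Mf i → Bool)}
  {A : Type} [iA : L.Structure A]

def piEvalHom (i : ι) : (∀ j, Mf j) →[L] Mf i where
  toFun p := p i
  map_fun' _ _ := rfl
  map_rel' _ _ h := h i

theorem exists_hom_ne_of_ISPc (hA : ISPc (L := L) Mf A iA) {a b : A} (hab : a ≠ b) :
    ∃ (i : ι) (x : A →[L] Mf i), x a ≠ x b := by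
  obtain ⟨κ, g, ⟨e⟩⟩ := hA
  obtain ⟨k, hk⟩ := Function.ne_iff.1 (e.injective.ne hab)
  exact ⟨g k, (piEvalHom k).comp e.toHom, hk⟩

def YSet.eval (p : YSet L Mf Ω A) : A → Bool := fun a => (p.2.2 : Mf p.1 → Bool) (p.2.1 a)

theorem YSet.isBoolDHom_eval (hΩ : ∀ i, ∀ ω ∈ Ω i, IsBoolDHom s ω) (p : YSet L Mf Ω A) :
    IsBoolDHom s p.eval :=
  (hΩ p.1 _ p.2.2.2).comp p.2.1

theorem YSet.yle_iff_eval_le [∀ i, Finite (Mf i)] {p q : YSet L Mf Ω A} :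
    yle L Mf Ω A p q ↔ p.eval ≤ q.eval :=
  exists_mem_RSet_forall_mem_iff _ _ _ _

theorem YSet.yequiv_iff_eval_eq [∀ i, Finite (Mf i)] {p q : YSet L Mf Ω A} :
    yequiv L Mf Ω A p q ↔ p.eval = q.eval := by
  rw [yequiv, yle_iff_eval_le, yle_iff_eval_le, le_antisymm_iff]

theorem YSet.exists_eval_ne (hA : ISPc (L := L) Mf A iA) (hsep : SepCond (L := L) Mf Ω)
    {a b : A} (hab : a ≠ b) :
    ∃ p : YSet L Mf Ω A, p.eval a ≠ p.eval b := by
  obtain ⟨i, x, hx⟩ := exists_hom_ne_of_ISPc hA hab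
  obtain ⟨j, u, ω, hω, hne⟩ := hsep i _ _ hx
  exact ⟨⟨j, u.comp x, ω, hω⟩, hne⟩

theorem YSet.exists_eval_eq_true_and_eq_false (hA : ISPc (L := L) Mf A iA)
    (hΩ : ∀ i, ∀ ω ∈ Ω i, IsBoolDHom s ω) (hsep : SepCond (L := L) Mf Ω) {a b : A}
    (hab : dmeet s a b ≠ a) : ∃ p : YSet L Mf Ω A, p.eval a = true ∧ p.eval b = false :=
  (exists_eval_ne hA hsep hab).imp fun p hp =>
    (isBoolDHom_eval hΩ p).eq_true_and_eq_false_of_dmeet_ne hp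

theorem YSet.compactSpace [Finite ι] [∀ i, Finite (Mf i)] :
    @CompactSpace (YSet L Mf Ω A) (yTop L Mf Ω A) := by
  let _ : ∀ i, TopologicalSpace (A →[L] Mf i) := fun i => homTop A (Mf i)
  let _ : ∀ i, TopologicalSpace (Ω i) := fun _ => ⊥
  have _ : ∀ i, CompactSpace (A →[L] Mf i) := fun i => compactSpace_homTop A (Mf i)
  exact (inferInstance : CompactSpace (Σ i, (A →[L] Mf i) × Ω i))

theorem YSet.t2Space : @T2Space (YSet L Mf Ω A) (yTop L Mf Ω A) := by
  let _ : ∀ i, TopologicalSpace (A →[L] Mf i) := fun i => homTop A (Mf i)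
  let _ : ∀ i, TopologicalSpace (Ω i) := fun _ => ⊥
  have _ : ∀ i, DiscreteTopology (Ω i) := fun _ => ⟨rfl⟩
  have _ : ∀ i, T2Space (A →[L] Mf i) := fun i => t2Space_homTop A (Mf i)
  exact (inferInstance : T2Space (Σ i, (A →[L] Mf i) × Ω i))

theorem YSet.continuous_eval :
    @Continuous (YSet L Mf Ω A) (A → Bool) (yTop L Mf Ω A) _ YSet.eval := by
  let _ : ∀ i, TopologicalSpace (Mf i) := fun _ => ⊥
  have _ : ∀ i, DiscreteTopology (Mf i) := fun _ => ⟨rfl⟩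
  let _ : ∀ i, TopologicalSpace (A →[L] Mf i) := fun i => homTop A (Mf i)
  let _ : ∀ i, TopologicalSpace (Ω i) := fun _ => ⊥
  have _ : ∀ i, DiscreteTopology (Ω i) := fun _ => ⟨rfl⟩
  refine continuous_sigma fun i => continuous_pi fun a => ?_
  have happly : Continuous fun x : A →[L] Mf i => x a :=
    (continuous_apply a).comp continuous_induced_dom
  exact (continuous_of_discreteTopology (f := fun z : Mf i × Ω i => (z.2 : Mf i → Bool) z.1)).comp
    (happly.prodMap continuous_id)

theorem YSet.surjective_eval [Finite ι] [∀ i, Finite (Mf i)] (hA : ISPc (L := L) Mf A iA)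
    (hΩ : ∀ i, ∀ ω ∈ Ω i, IsBoolDHom s ω) (hsep : SepCond (L := L) Mf Ω) {f : A → Bool}
    (hf : IsBoolDHom s f) : ∃ p : YSet L Mf Ω A, p.eval = f := by
  let _ := yTop L Mf Ω A
  have _ := YSet.compactSpace (L := L) (Mf := Mf) (Ω := Ω) (A := A)
  refine mem_of_isCompact_of_forall_finset_exists_eqOn (isCompact_range continuous_eval)
    fun S => exists_eqOn_finset_of_separating ?_ (fun a b hab => ?_) hf S
  · rintro _ ⟨p, rfl⟩
    exact isBoolDHom_eval hΩ p
  · obtain ⟨p, hp⟩ := exists_eval_eq_true_and_eq_false hA hΩ hsep hab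
    exact ⟨_, ⟨p, rfl⟩, hp⟩

theorem yQuotLe_iff [∀ i, Finite (Mf i)] {g : YQuot L Mf Ω A → A → Bool}
    (hg : ∀ p, g (Quot.mk _ p) = p.eval) (u v : YQuot L Mf Ω A) :
    yQuotLe L Mf Ω A u v ↔ g u ≤ g v := by
  constructor
  · rintro ⟨p, q, rfl, rfl, h⟩
    rw [hg, hg]
    exact YSet.yle_iff_eval_le.1 h
  · obtain ⟨p, rfl⟩ := Quot.exists_rep u
    obtain ⟨q, rfl⟩ := Quot.exists_rep v
    rw [hg, hg]
    exact fun h => ⟨p, q, rfl, rfl, YSet.yle_iff_eval_le.2 h⟩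

end PiggybackSpace

theorem Y_quotient_is_priestley_dual_general
    (L : FirstOrder.Language.{0,0}) (s : DSig L)
    (ι : Type) [Fintype ι] (Mf : ι → Type) [∀ i, L.Structure (Mf i)] [∀ i, Fintype (Mf i)]
    (Ω : ∀ i, Set (Mf i → Bool)) (hΩ : ∀ i, ∀ ω ∈ Ω i, IsBoolDHom s ω)
    (hsep : SepCond (L := L) Mf Ω)
    (A : Type) [iA : L.Structure A] (hA : ISPc (L := L) Mf A iA) :
    -- (i) (Y, T_Y) is compact and Hausdorff
    (@CompactSpace (YSet L Mf Ω A) (yTop L Mf Ω A)) ∧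
    (@T2Space (YSet L Mf Ω A) (yTop L Mf Ω A)) ∧
    -- (ii) ⪯ is a pre-order on Y
    (∀ p, yle L Mf Ω A p p) ∧
    (∀ p q r, yle L Mf Ω A p q → yle L Mf Ω A q r → yle L Mf Ω A p r) ∧
    -- (iii) (Y/≈, ⪯/≈, T_Y/≈) is a Priestley space isomorphic to HU(A)
    ((∀ u, yQuotLe L Mf Ω A u u) ∧
     (∀ u v w, yQuotLe L Mf Ω A u v → yQuotLe L Mf Ω A v w → yQuotLe L Mf Ω A u w) ∧
     (∀ u v, yQuotLe L Mf Ω A u v → yQuotLe L Mf Ω A v u → u = v) ∧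
     (@CompactSpace (YQuot L Mf Ω A) (yQuotTop L Mf Ω A)) ∧
     (∀ u v : YQuot L Mf Ω A, ¬ yQuotLe L Mf Ω A u v →
        ∃ U : Set (YQuot L Mf Ω A),
          @IsClopen _ (yQuotTop L Mf Ω A) U ∧
          (∀ w w', yQuotLe L Mf Ω A w w' → w ∈ U → w' ∈ U) ∧
          u ∈ U ∧ v ∉ U) ∧
     ∃ e : @Homeomorph (YQuot L Mf Ω A) {f : A → Bool // IsBoolDHom s f}
          (yQuotTop L Mf Ω A) (huTop s A),
        ∀ p q : YSet L Mf Ω A,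
          (yle L Mf Ω A p q ↔
            ((e (Quot.mk _ p) : A → Bool) ≤ (e (Quot.mk _ q) : A → Bool)))) := by
  let _ := yTop L Mf Ω A
  let _ := yQuotTop L Mf Ω A
  have _ := YSet.compactSpace (L := L) (Mf := Mf) (Ω := Ω) (A := A)
  have hle : ∀ p q : YSet L Mf Ω A, yle L Mf Ω A p q ↔ p.eval ≤ q.eval :=
    fun _ _ => YSet.yle_iff_eval_le
  let φ : YSet L Mf Ω A → {f : A → Bool // IsBoolDHom s f} :=
    fun p => ⟨p.eval, YSet.isBoolDHom_eval hΩ p⟩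
  obtain ⟨e, he⟩ : ∃ e : YQuot L Mf Ω A ≃ₜ {f : A → Bool // IsBoolDHom s f},
      ∀ p, e (Quot.mk _ p) = φ p := Quot.exists_homeomorph_of_forall_rel_iff
    (YSet.continuous_eval.subtype_mk _)
    (fun f => (YSet.surjective_eval hA hΩ hsep f.2).imp fun _ hp => Subtype.ext hp)
    (fun p q => YSet.yequiv_iff_eval_eq.trans (Subtype.ext_iff (a1 := φ p) (a2 := φ q)).symm)
  have heval : ∀ p, (e (Quot.mk _ p) : A → Bool) = p.eval := fun p => congrArg Subtype.val (he p)
  have hQle : ∀ u v, yQuotLe L Mf Ω A u v ↔ (e u : A → Bool) ≤ e v := yQuotLe_iff heval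
  refine ⟨YSet.compactSpace, YSet.t2Space, fun p => (hle p p).2 le_rfl,
    fun p q r hpq hqr => (hle p r).2 (((hle p q).1 hpq).trans ((hle q r).1 hqr)),
    fun u => (hQle u u).2 le_rfl,
    fun u v w huv hvw => (hQle u w).2 (((hQle u v).1 huv).trans ((hQle v w).1 hvw)),
    fun u v huv hvu => e.injective (Subtype.ext (((hQle u v).1 huv).antisymm ((hQle v u).1 hvu))),
    Quot.compactSpace,
    fun u v => exists_isClopen_upper_of_not_rel (continuous_subtype_val.comp e.continuous) hQle,
    e, fun p q => ?_⟩
  convert hle p q using 2 <;> exact heval _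

/-- Let `A = ISP(M)` be a finitely generated `D`-based quasivariety, with carrier maps `Ω`
satisfying `(Sep)_{M,Ω}`, and let `A ∈ A`.  Then for
`Y = ⋃ { X_M × Ω_M : M ∈ M }` (where `X = D(A)`), topologized as above and pre-ordered
by `(x,ω₁) ⪯ (y,ω₂) ↔ (x,y) ∈ r^X` for some `r ∈ R_{ω₁,ω₂}`:
(i) `(Y, T_Y)` is compact and Hausdorff;
(ii) `⪯` is a pre-order (reflexive and transitive) on `Y`;
(iii) with `≈ = ⪯ ∩ ⪰`, the quotient `(Y/≈, ⪯/≈, T_Y/≈)` is a Priestley space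
(its order is a partial order, the space is compact, and it is totally
order-disconnected) isomorphic to `HU(A)`, via a homeomorphism which is also an
order-isomorphism. -/
theorem Y_quotient_is_priestley_dual
    (L : FirstOrder.Language.{0,0}) (s : DSig L)
    (ι : Type) [Fintype ι] (Mf : ι → Type) [∀ i, L.Structure (Mf i)] [∀ i, Fintype (Mf i)]
    (hDbased : ∀ (X : Type) (iX : L.Structure X), ISPc (L := L) Mf X iX → IsDAlg s X)
    (Ω : ∀ i, Set (Mf i → Bool)) (hΩ : ∀ i, ∀ ω ∈ Ω i, IsBoolDHom s ω)
    (hsep : SepCond (L := L) Mf Ω)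
    (A : Type) [iA : L.Structure A] (hA : ISPc (L := L) Mf A iA) :
    -- (i) (Y, T_Y) is compact and Hausdorff
    (@CompactSpace (YSet L Mf Ω A) (yTop L Mf Ω A)) ∧
    (@T2Space (YSet L Mf Ω A) (yTop L Mf Ω A)) ∧
    -- (ii) ⪯ is a pre-order on Y
    (∀ p, yle L Mf Ω A p p) ∧
    (∀ p q r, yle L Mf Ω A p q → yle L Mf Ω A q r → yle L Mf Ω A p r) ∧
    -- (iii) (Y/≈, ⪯/≈, T_Y/≈) is a Priestley space isomorphic to HU(A)
    ((∀ u, yQuotLe L Mf Ω A u u) ∧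
     (∀ u v w, yQuotLe L Mf Ω A u v → yQuotLe L Mf Ω A v w → yQuotLe L Mf Ω A u w) ∧
     (∀ u v, yQuotLe L Mf Ω A u v → yQuotLe L Mf Ω A v u → u = v) ∧
     (@CompactSpace (YQuot L Mf Ω A) (yQuotTop L Mf Ω A)) ∧
     (∀ u v : YQuot L Mf Ω A, ¬ yQuotLe L Mf Ω A u v →
        ∃ U : Set (YQuot L Mf Ω A),
          @IsClopen _ (yQuotTop L Mf Ω A) U ∧
          (∀ w w', yQuotLe L Mf Ω A w w' → w ∈ U → w' ∈ U) ∧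
          u ∈ U ∧ v ∉ U) ∧
     ∃ e : @Homeomorph (YQuot L Mf Ω A) {f : A → Bool // IsBoolDHom s f}
          (yQuotTop L Mf Ω A) (huTop s A),
        ∀ p q : YSet L Mf Ω A,
          (yle L Mf Ω A p q ↔
            ((e (Quot.mk _ p) : A → Bool) ≤ (e (Quot.mk _ q) : A → Bool)))) :=
  Y_quotient_is_priestley_dual_general L s ι Mf Ω hΩ hsep A (iA := iA) hA

end CoproductsPaper
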